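/- (Theorem 2) Let T > 0 and let t ↦ ρ_t, t ∈ [0,T], be a continuously differentiable family of density matrices on ℂ^d with derivative ρ̇_t. Then | ‖Im ρ_T‖₁ − ‖Im ρ_0‖₁ | ≤ ∫₀ᵀ ‖Im ρ̇_t‖₁ dt, where Im ρ̇_t = (ρ̇_t − ρ̇_tᵀ)/(2i). In particular, T ≥ |M_tr(ρ_T) − M_tr(ρ_0)| / Λ_tr(T), where M_tr(ρ) := ‖Im ρ‖₁ and Λ_tr(T) := (1/T) ∫₀ᵀ ‖Im ρ̇_t‖₁ dt. -/

import Mathlib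

open Matrix
open scoped ComplexOrder

noncomputable section

/-- A density matrix: Hermitian, positive semidefinite, trace one. -/
def IsDensityMatrix {d : ℕ} (ρ : Matrix (Fin d) (Fin d) ℂ) : Prop :=
  ρ.IsHermitian ∧ ρ.PosSemidef ∧ ρ.trace = 1

/-- The real part `(ρ + ρᵀ)/2` of a matrix. -/
def reM {d : ℕ} (ρ : Matrix (Fin d) (Fin d) ℂ) : Matrix (Fin d) (Fin d) ℂ :=
  (2⁻¹ : ℂ) • (ρ + ρᵀ)

/-- The imaginary part `(ρ - ρᵀ)/(2i)` of a matrix. -/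
def imM {d : ℕ} (ρ : Matrix (Fin d) (Fin d) ℂ) : Matrix (Fin d) (Fin d) ℂ :=
  (2 * Complex.I)⁻¹ • (ρ - ρᵀ)

/-- The Hilbert–Schmidt norm `√(tr (Aᴴ A))`. -/
def hsNorm {d : ℕ} (A : Matrix (Fin d) (Fin d) ℂ) : ℝ :=
  Real.sqrt ((Aᴴ * A).trace.re)

/-- The square root of a positive semidefinite matrix, as `Matrix.PosSemidef.sqrt` was defined
in the older Mathlib (removed since). -/
def psdSqrt {d : ℕ} {A : Matrix (Fin d) (Fin d) ℂ} (hA : A.PosSemidef) : Matrix (Fin d) (Fin d) ℂ :=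
  hA.isHermitian.eigenvectorUnitary.1 * diagonal ((↑) ∘ (√·) ∘ hA.isHermitian.eigenvalues) *
  (star hA.isHermitian.eigenvectorUnitary : Matrix (Fin d) (Fin d) ℂ)

/-- The trace norm `tr √(Aᴴ A)`. -/
def traceNorm {d : ℕ} (A : Matrix (Fin d) (Fin d) ℂ) : ℝ :=
  ((psdSqrt (Matrix.posSemidef_conjTranspose_mul_self A)).trace).re

/-- Matrix logarithm via the continuous functional calculus (on Hermitian matrices). -/
def matLog {d : ℕ} (A : Matrix (Fin d) (Fin d) ℂ) : Matrix (Fin d) (Fin d) ℂ :=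
  cfc Real.log A

open scoped Classical in
/-- The positive semidefinite square root of a positive semidefinite matrix
(junk value `0` otherwise). -/
def msqrt {d : ℕ} (A : Matrix (Fin d) (Fin d) ℂ) : Matrix (Fin d) (Fin d) ℂ :=
  if h : A.PosSemidef then psdSqrt h else 0

/-- The von Neumann entropy `S(ρ) = -tr(ρ log ρ)`. -/
def vnEntropy {d : ℕ} (ρ : Matrix (Fin d) (Fin d) ℂ) : ℝ :=
  -((ρ * matLog ρ).trace.re)

/-- The relative entropy of imaginarity `M_r(ρ) = S(Re ρ) - S(ρ)`. -/
def Mr {d : ℕ} (ρ : Matrix (Fin d) (Fin d) ℂ) : ℝ :=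
  vnEntropy (reM ρ) - vnEntropy ρ

/-- The root fidelity `tr √(√ρ σ √ρ)`. -/
def rootFid {d : ℕ} (ρ σ : Matrix (Fin d) (Fin d) ℂ) : ℝ :=
  ((msqrt (msqrt ρ * σ * msqrt ρ)).trace).re

/-- The geometric imaginarity `M_g(ρ) = (1 - √F(ρ, ρᵀ))/2`. -/
def Mg {d : ℕ} (ρ : Matrix (Fin d) (Fin d) ℂ) : ℝ :=
  (1 - rootFid ρ ρᵀ) / 2

/-- The Hilbert–Schmidt inner product `⟨A, B⟩ = tr(Aᴴ B)`. -/
def hsInner {d : ℕ} (A B : Matrix (Fin d) (Fin d) ℂ) : ℂ :=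
  (Aᴴ * B).trace

/-- The operator norm of a map on matrices induced by the Hilbert–Schmidt norm. -/
def opNormHS {d : ℕ} (L : Matrix (Fin d) (Fin d) ℂ → Matrix (Fin d) (Fin d) ℂ) : ℝ :=
  sSup {x : ℝ | ∃ ψ, hsNorm ψ = 1 ∧ x = hsNorm (L ψ)}

/-- The Liouville-space normalized vector `ρ̃ = ρ / ‖ρ‖_HS`. -/
def hsNormalize {d : ℕ} (A : Matrix (Fin d) (Fin d) ℂ) : Matrix (Fin d) (Fin d) ℂ :=
  ((hsNorm A : ℂ))⁻¹ • A

/-- The fluctuation `Δ𝓛 = √(‖𝓛ψ‖² - |⟨ψ, 𝓛ψ⟩|²)` of a superoperator at a unit vector. -/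
def fluct {d : ℕ} (L : Matrix (Fin d) (Fin d) ℂ → Matrix (Fin d) (Fin d) ℂ)
    (ψ : Matrix (Fin d) (Fin d) ℂ) : ℝ :=
  Real.sqrt ((hsNorm (L ψ)) ^ 2 - (‖hsInner ψ (L ψ)‖) ^ 2)

/-!
For a Hermitian matrix `H`, `‖H‖₁ = ∑ᵢ |λᵢ(H)|` is the largest value of `∑ᵢ |(W⋆ H W)ᵢᵢ|` over
unitaries `W`, attained when `W` diagonalizes `H`, and for fixed `W` this quantity is a seminorm
of `H`. Fixing `W` to diagonalize `H_b` (or `H_a`) reduces the estimate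
`|‖H_b‖₁ - ‖H_a‖₁| ≤ ∫ₐᵇ ‖Ḣ_t‖₁ dt` to the scalar bound `|f b - f a| ≤ ∫ₐᵇ |f'|` for each
diagonal entry of `W⋆ H_t W`. It is applied to `H_t = i · Im ρ_t`, which is Hermitian and has the
same trace norm as `Im ρ_t`.
-/

open Set Filter Topology MeasureTheory

lemma Matrix.IsHermitian.trace_cfc {n : Type*} [Fintype n] [DecidableEq n]
    {A : Matrix n n ℂ} (hA : A.IsHermitian) (f : ℝ → ℝ) :
    (cfc f A).trace = ∑ i, (f (hA.eigenvalues i) : ℂ) := by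
  rw [hA.cfc_eq, IsHermitian.cfc, Unitary.conjStarAlgAut_apply, trace_mul_cycle,
    Unitary.coe_star_mul_self, one_mul, trace_diagonal]
  rfl

lemma traceNorm_eq_re_trace_cfc_sqrt {d : ℕ} (A : Matrix (Fin d) (Fin d) ℂ) :
    traceNorm A = (cfc Real.sqrt (Aᴴ * A)).trace.re := by
  rw [(posSemidef_conjTranspose_mul_self A).isHermitian.cfc_eq]
  rfl

lemma Matrix.IsHermitian.traceNorm_eq_sum_abs_eigenvalues {d : ℕ}
    {H : Matrix (Fin d) (Fin d) ℂ} (hH : H.IsHermitian) :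
    traceNorm H = ∑ i, |hH.eigenvalues i| := by
  have hsq : Hᴴ * H = cfc (fun x : ℝ => x ^ 2) H := by
    rw [hH.eq, cfc_pow_id H 2 hH.isSelfAdjoint, sq]
  rw [traceNorm_eq_re_trace_cfc_sqrt, hsq, ← cfc_comp' Real.sqrt (· ^ 2) H, hH.trace_cfc]
  simp [Real.sqrt_sq_eq_abs]

lemma traceNorm_I_smul {d : ℕ} (A : Matrix (Fin d) (Fin d) ℂ) :
    traceNorm (Complex.I • A) = traceNorm A := by
  rw [traceNorm_eq_re_trace_cfc_sqrt, traceNorm_eq_re_trace_cfc_sqrt, conjTranspose_smul,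
    smul_mul_smul_comm, Complex.star_def, Complex.conj_I, neg_mul, Complex.I_mul_I, neg_neg,
    one_smul]

lemma I_smul_imM_apply {d : ℕ} (X : Matrix (Fin d) (Fin d) ℂ) (i j : Fin d) :
    (Complex.I • imM X) i j = (X i j - X j i) / 2 := by
  simp only [imM, Matrix.smul_apply, Matrix.sub_apply, transpose_apply, smul_eq_mul]
  field_simp

section DiagSeminorm

variable {n : Type*} [Fintype n]

def diagSeminorm (W : Matrix n n ℂ) : Seminorm ℂ (Matrix n n ℂ) :=
  Seminorm.of (fun A => ∑ i, ‖(star W * A * W) i i‖)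
    (fun A B => by
      simpa only [Matrix.mul_add, Matrix.add_mul, Matrix.add_apply, ← Finset.sum_add_distrib]
        using Finset.sum_le_sum fun i _ => norm_add_le _ _)
    (fun c A => by
      simp only [Matrix.mul_smul, Matrix.smul_mul, Matrix.smul_apply, smul_eq_mul, norm_mul,
        Finset.mul_sum])

lemma diagSeminorm_apply (W A : Matrix n n ℂ) :
    diagSeminorm W A = ∑ i, ‖(star W * A * W) i i‖ :=
  rfl

lemma diagSeminorm_le_card_mul_sum_norm [DecidableEq n] {W : Matrix n n ℂ}
    (hW : W ∈ unitaryGroup n ℂ) (A : Matrix n n ℂ) :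
    diagSeminorm W A ≤ Fintype.card n * ∑ a, ∑ b, ‖A a b‖ := by
  have hentry : ∀ i, ‖(star W * A * W) i i‖ ≤ ∑ a, ∑ b, ‖A a b‖ := fun i => calc
    ‖(star W * A * W) i i‖ = ‖∑ b, ∑ a, star (W a i) * A a b * W b i‖ := by
      simp only [mul_apply, star_apply, Finset.sum_mul]
    _ ≤ ∑ b, ∑ a, ‖A a b‖ := by
      refine (norm_sum_le _ _).trans (Finset.sum_le_sum fun b _ => ?_)
      refine (norm_sum_le _ _).trans (Finset.sum_le_sum fun a _ => ?_)
      rw [norm_mul, norm_mul, norm_star]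
      exact (mul_le_of_le_one_right (by positivity) (entry_norm_bound_of_unitary hW b i)).trans
        (mul_le_of_le_one_left (norm_nonneg _) (entry_norm_bound_of_unitary hW a i))
    _ = ∑ a, ∑ b, ‖A a b‖ := Finset.sum_comm
  simpa [diagSeminorm_apply] using Finset.sum_le_sum fun i (_ : i ∈ Finset.univ) => hentry i

end DiagSeminorm

namespace Matrix.IsHermitian

variable {d : ℕ} {H K : Matrix (Fin d) (Fin d) ℂ}

lemma diagSeminorm_le_traceNorm (hH : H.IsHermitian) {W : Matrix (Fin d) (Fin d) ℂ}
    (hW : W ∈ unitaryGroup (Fin d) ℂ) : diagSeminorm W H ≤ traceNorm H := by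
  set M : Matrix (Fin d) (Fin d) ℂ := star W * hH.eigenvectorUnitary
  have hM : M ∈ unitaryGroup (Fin d) ℂ :=
    Submonoid.mul_mem _ (Unitary.star_mem hW) hH.eigenvectorUnitary.2
  have hcol : ∀ j, ∑ i, ‖M i j‖ ^ 2 = 1 := fun j => by
    have h := congrArg (fun X : Matrix (Fin d) (Fin d) ℂ => X j j) (mem_unitaryGroup_iff'.mp hM)
    simp only [mul_apply, star_apply, one_apply_eq, RCLike.star_def, RCLike.conj_mul] at h
    rw [← Complex.ofReal_inj]
    push_cast
    exact h
  have hentry : ∀ i, (star W * H * W) i i = ∑ j, (hH.eigenvalues j : ℂ) * (‖M i j‖ ^ 2 : ℝ) :=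
    fun i => by
      have hconj : star W * H * W = M * diagonal (RCLike.ofReal ∘ hH.eigenvalues) * star M := by
        conv_lhs => rw [hH.spectral_theorem, Unitary.conjStarAlgAut_apply]
        simp only [M, star_mul, star_star, Matrix.mul_assoc]
      rw [hconj, mul_apply]
      refine Finset.sum_congr rfl fun j _ => ?_
      rw [mul_diagonal, star_apply, Function.comp_apply, mul_right_comm, RCLike.star_def,
        RCLike.mul_conj]
      push_cast
      exact mul_comm _ _
  calc diagSeminorm W H
      = ∑ i, ‖∑ j, (hH.eigenvalues j : ℂ) * (‖M i j‖ ^ 2 : ℝ)‖ := by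
        simp only [diagSeminorm_apply, hentry]
    _ ≤ ∑ i, ∑ j, |hH.eigenvalues j| * ‖M i j‖ ^ 2 := by
        refine Finset.sum_le_sum fun i _ => (norm_sum_le _ _).trans_eq ?_
        simp
    _ = traceNorm H := by
        rw [Finset.sum_comm, hH.traceNorm_eq_sum_abs_eigenvalues]
        simp only [← Finset.mul_sum, hcol, mul_one]

lemma diagSeminorm_eigenvectorUnitary (hH : H.IsHermitian) :
    diagSeminorm hH.eigenvectorUnitary H = traceNorm H := by
  rw [diagSeminorm_apply, ← Unitary.conjStarAlgAut_star_apply (S := ℂ),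
    hH.conjStarAlgAut_star_eigenvectorUnitary, hH.traceNorm_eq_sum_abs_eigenvalues]
  simp

lemma traceNorm_sub_le_diagSeminorm (hH : H.IsHermitian) (hK : K.IsHermitian) :
    traceNorm H - traceNorm K ≤ diagSeminorm hH.eigenvectorUnitary (H - K) := by
  rw [← hH.diagSeminorm_eigenvectorUnitary]
  exact (sub_le_sub_left (hK.diagSeminorm_le_traceNorm hH.eigenvectorUnitary.2) _).trans
    ((le_abs_self _).trans (abs_sub_map_le_sub _ _ _))

lemma abs_traceNorm_sub_le_card_mul_sum_norm (hH : H.IsHermitian) (hK : K.IsHermitian) :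
    |traceNorm H - traceNorm K| ≤ d * ∑ a, ∑ b, ‖H a b - K a b‖ := by
  refine abs_sub_le_iff.2 ⟨?_, ?_⟩
  · simpa using (hH.traceNorm_sub_le_diagSeminorm hK).trans
      (diagSeminorm_le_card_mul_sum_norm hH.eigenvectorUnitary.2 _)
  · simpa [norm_sub_rev] using (hK.traceNorm_sub_le_diagSeminorm hH).trans
      (diagSeminorm_le_card_mul_sum_norm hK.eigenvectorUnitary.2 _)

lemma I_smul_imM (hH : H.IsHermitian) : (Complex.I • imM H).IsHermitian :=
  IsHermitian.ext fun i j => by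
    rw [I_smul_imM_apply, I_smul_imM_apply, star_div₀, star_sub, hH.apply, hH.apply]
    simp

lemma of_hasDerivWithinAt {n : Type*} {A : ℝ → Matrix n n ℂ}
    {A' : Matrix n n ℂ} {s : Set ℝ} {t : ℝ} (hs : UniqueDiffWithinAt ℝ s t) (ht : t ∈ s)
    (hA : ∀ u ∈ s, (A u).IsHermitian)
    (hA' : ∀ i j, HasDerivWithinAt (fun u => A u i j) (A' i j) s t) : A'.IsHermitian :=
  IsHermitian.ext fun i j => hs.eq_deriv _
    ((hA' j i).star.congr (fun u hu => ((hA u hu).apply i j).symm) ((hA t ht).apply i j).symm)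
    (hA' i j)

end Matrix.IsHermitian

lemma continuousOn_traceNorm {X : Type*} [TopologicalSpace X] {s : Set X} {d : ℕ}
    {H : X → Matrix (Fin d) (Fin d) ℂ} (hH : ∀ x ∈ s, (H x).IsHermitian)
    (hc : ∀ i j, ContinuousOn (fun x => H x i j) s) :
    ContinuousOn (fun x => traceNorm (H x)) s := by
  intro x hx
  have hbound : Tendsto (fun y => (d : ℝ) * ∑ a, ∑ b, ‖H y a b - H x a b‖) (𝓝[s] x) (𝓝 0) := by
    have : ContinuousWithinAt (fun y => (d : ℝ) * ∑ a, ∑ b, ‖H y a b - H x a b‖) s x :=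
      ContinuousOn.continuousWithinAt (by fun_prop) hx
    simpa using this.tendsto
  refine tendsto_iff_dist_tendsto_zero.2 (squeeze_zero' (.of_forall fun _ => dist_nonneg)
    (eventually_nhdsWithin_of_forall fun y hy => ?_) hbound)
  rw [Real.dist_eq]
  exact (hH y hy).abs_traceNorm_sub_le_card_mul_sum_norm (hH x hx)

lemma norm_sub_le_integral_norm_of_hasDerivAt {E : Type*} [NormedAddCommGroup E]
    [NormedSpace ℝ E] [CompleteSpace E] {f f' : ℝ → E} {a b : ℝ} (hab : a ≤ b)
    (hf : ∀ t ∈ Icc a b, HasDerivAt f (f' t) t) (hf' : ContinuousOn f' (Icc a b)) :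
    ‖f b - f a‖ ≤ ∫ t in a..b, ‖f' t‖ := by
  rw [← uIcc_of_le hab] at hf hf'
  rw [← intervalIntegral.integral_eq_sub_of_hasDerivAt hf hf'.intervalIntegrable]
  exact intervalIntegral.norm_integral_le_integral_norm hab

lemma hasDerivAt_mul_mul_apply {l m n p : Type*} [Fintype m] [Fintype n]
    {A : ℝ → Matrix m n ℂ} {A' : Matrix m n ℂ} {t : ℝ}
    (hA : ∀ i j, HasDerivAt (fun s => A s i j) (A' i j) t) (M : Matrix l m ℂ) (N : Matrix n p ℂ)
    (i : l) (j : p) : HasDerivAt (fun s => (M * A s * N) i j) ((M * A' * N) i j) t := by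
  simp only [mul_apply]
  exact .fun_sum fun b _ => (HasDerivAt.fun_sum fun a _ => (hA a b).const_mul _).mul_const _

lemma diagSeminorm_sub_le_integral {n : Type*} [Fintype n] {A A' : ℝ → Matrix n n ℂ}
    {B : ℝ → ℝ} {a b : ℝ} (hab : a ≤ b)
    (hA : ∀ t ∈ Icc a b, ∀ i j, HasDerivAt (fun s => A s i j) (A' t i j) t)
    (hA' : ∀ i j, ContinuousOn (fun t => A' t i j) (Icc a b)) (W : Matrix n n ℂ)
    (hB : ∀ t ∈ Icc a b, diagSeminorm W (A' t) ≤ B t) (hBi : IntervalIntegrable B volume a b) :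
    diagSeminorm W (A b - A a) ≤ ∫ t in a..b, B t := by
  have hcont : ∀ i, ContinuousOn (fun t => (star W * A' t * W) i i) (Icc a b) := fun i => by
    simp only [mul_apply]
    fun_prop
  have hint : ∀ i, IntervalIntegrable (fun t => ‖(star W * A' t * W) i i‖) volume a b :=
    fun i => ((uIcc_of_le hab).symm ▸ (hcont i).norm).intervalIntegrable
  calc diagSeminorm W (A b - A a)
      = ∑ i, ‖(star W * A b * W) i i - (star W * A a * W) i i‖ := by
        simp only [diagSeminorm_apply, Matrix.mul_sub, Matrix.sub_mul, Matrix.sub_apply]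
    _ ≤ ∑ i, ∫ t in a..b, ‖(star W * A' t * W) i i‖ :=
        Finset.sum_le_sum fun i _ => norm_sub_le_integral_norm_of_hasDerivAt hab
          (fun t ht => hasDerivAt_mul_mul_apply (hA t ht) _ _ i i) (hcont i)
    _ = ∫ t in a..b, diagSeminorm W (A' t) :=
        (intervalIntegral.integral_finsetSum fun i _ => hint i).symm
    _ ≤ ∫ t in a..b, B t :=
        intervalIntegral.integral_mono_on hab
          (by simpa only [diagSeminorm_apply, Finset.sum_fn] using
            IntervalIntegrable.sum Finset.univ fun i _ => hint i) hBi hB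

lemma abs_traceNorm_sub_le_integral {d : ℕ} {H H' : ℝ → Matrix (Fin d) (Fin d) ℂ} {a b : ℝ}
    (hab : a ≤ b) (hH : ∀ t ∈ Icc a b, (H t).IsHermitian)
    (hH' : ∀ t ∈ Icc a b, (H' t).IsHermitian)
    (hderiv : ∀ t ∈ Icc a b, ∀ i j, HasDerivAt (fun s => H s i j) (H' t i j) t)
    (hcont : ∀ i j, ContinuousOn (fun t => H' t i j) (Icc a b)) :
    |traceNorm (H b) - traceNorm (H a)| ≤ ∫ t in a..b, traceNorm (H' t) := by
  have ha : (H a).IsHermitian := hH a (left_mem_Icc.2 hab)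
  have hb : (H b).IsHermitian := hH b (right_mem_Icc.2 hab)
  have hint : IntervalIntegrable (fun t => traceNorm (H' t)) volume a b :=
    ((uIcc_of_le hab).symm ▸ continuousOn_traceNorm hH' hcont).intervalIntegrable
  have hdisp : ∀ W ∈ unitaryGroup (Fin d) ℂ,
      diagSeminorm W (H b - H a) ≤ ∫ t in a..b, traceNorm (H' t) := fun W hW =>
    diagSeminorm_sub_le_integral hab hderiv hcont W
      (fun t ht => (hH' t ht).diagSeminorm_le_traceNorm hW) hint
  refine abs_sub_le_iff.2 ⟨?_, ?_⟩
  · exact (hb.traceNorm_sub_le_diagSeminorm ha).trans (hdisp _ hb.eigenvectorUnitary.2)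
  · exact (ha.traceNorm_sub_le_diagSeminorm hb).trans
      ((map_sub_rev _ _ _).trans_le (hdisp _ ha.eigenvectorUnitary.2))

theorem isl_trace_distance {d : ℕ} (T : ℝ) (hT : 0 < T)
    (ρ ρ' : ℝ → Matrix (Fin d) (Fin d) ℂ)
    (hdm : ∀ t ∈ Set.Icc 0 T, IsDensityMatrix (ρ t))
    (hderiv : ∀ t ∈ Set.Icc 0 T, ∀ i j, HasDerivAt (fun s => ρ s i j) (ρ' t i j) t)
    (hcont : ∀ i j, ContinuousOn (fun t => ρ' t i j) (Set.Icc 0 T)) :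
    (|traceNorm (imM (ρ T)) - traceNorm (imM (ρ 0))| ≤
      ∫ t in (0:ℝ)..T, traceNorm (imM (ρ' t))) ∧
    (T ≥ |traceNorm (imM (ρ T)) - traceNorm (imM (ρ 0))| /
      ((1 / T) * ∫ t in (0:ℝ)..T, traceNorm (imM (ρ' t)))) := by
  have hρ : ∀ t ∈ Icc 0 T, (ρ t).IsHermitian := fun t ht => (hdm t ht).1
  have hρ' : ∀ t ∈ Icc 0 T, (ρ' t).IsHermitian := fun t ht =>
    .of_hasDerivWithinAt (uniqueDiffOn_Icc hT t ht) ht hρ fun i j =>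
      (hderiv t ht i j).hasDerivWithinAt
  have key := abs_traceNorm_sub_le_integral (H := fun t => Complex.I • imM (ρ t))
    (H' := fun t => Complex.I • imM (ρ' t)) hT.le
    (fun t ht => (hρ t ht).I_smul_imM) (fun t ht => (hρ' t ht).I_smul_imM)
    (fun t ht i j => by
      simpa only [I_smul_imM_apply] using
        ((hderiv t ht i j).fun_sub (hderiv t ht j i)).div_const 2)
    (fun i j => by
      simpa only [I_smul_imM_apply] using ((hcont i j).fun_sub (hcont j i)).div_const 2)
  simp only [traceNorm_I_smul] at key
  refine ⟨key, ?_⟩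
  rcases ((abs_nonneg _).trans key).eq_or_lt with h0 | hpos
  · rw [← h0, mul_zero, div_zero]
    exact hT.le
  · rwa [ge_iff_le, div_le_iff₀ (by positivity), one_div, mul_inv_cancel_left₀ hT.ne']
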